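/- (Model 2c3b4a) Define vector fields on ℝ⁴ (coordinates (x,y,u,v)) by e₁ = ∂x + y∂u, e₂ = −3y∂x + ∂y + x∂u, e₃ = 2x∂x + y∂y + 3u∂u, and let S = {(x, y, xy + y³, 0) : (x,y) ∈ ℝ²}. Then: (i) each of e₁, e₂, e₃ is tangent to S; (ii) at every point of S the first two components of e₁ and e₂, namely (1, 0) and (−3y, 1), are linearly independent, so S is affinely homogeneous; (iii) with bracket [X,Y](p) = (DY)(p)(X(p)) − (DX)(p)(Y(p)) one has [e₁,e₂] = 0, [e₁,e₃] = 2·e₁, [e₂,e₃] = e₂. -/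

import Mathlib

namespace Model2c3b4a

/-- Lie bracket of vector fields on `ℝ⁴`, `[X,Y](p) = DY(p)(X(p)) − DX(p)(Y(p))`. -/
noncomputable def lieBracket (X Y : (Fin 4 → ℝ) → Fin 4 → ℝ) :
    (Fin 4 → ℝ) → Fin 4 → ℝ :=
  fun p => fderiv ℝ Y p (X p) - fderiv ℝ X p (Y p)

/-- Tangency of a vector field `X` on `ℝ⁴ ∋ (x,y,u,v)` to the graph
`S = {(x, y, F(x,y), G(x,y))}`. -/
def TangentToGraph (F G : ℝ × ℝ → ℝ) (X : (Fin 4 → ℝ) → Fin 4 → ℝ) : Prop :=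
  ∀ p : ℝ × ℝ,
    X ![p.1, p.2, F p, G p] 2
        = fderiv ℝ F p (1, 0) * X ![p.1, p.2, F p, G p] 0
          + fderiv ℝ F p (0, 1) * X ![p.1, p.2, F p, G p] 1 ∧
    X ![p.1, p.2, F p, G p] 3
        = fderiv ℝ G p (1, 0) * X ![p.1, p.2, F p, G p] 0
          + fderiv ℝ G p (0, 1) * X ![p.1, p.2, F p, G p] 1

/-- `u = xy + y³`. -/
noncomputable def F : ℝ × ℝ → ℝ := fun p => p.1 * p.2 + p.2 ^ 3
/-- `v = 0`. -/
noncomputable def G : ℝ × ℝ → ℝ := fun _ => 0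

/-- `e₁ = ∂x + y∂u`. -/
noncomputable def e₁ : (Fin 4 → ℝ) → Fin 4 → ℝ := fun p => ![1, 0, p 1, 0]
/-- `e₂ = −3y∂x + ∂y + x∂u`. -/
noncomputable def e₂ : (Fin 4 → ℝ) → Fin 4 → ℝ := fun p => ![-3 * p 1, 1, p 0, 0]
/-- `e₃ = 2x∂x + y∂y + 3u∂u`. -/
noncomputable def e₃ : (Fin 4 → ℝ) → Fin 4 → ℝ :=
  fun p => ![2 * p 0, p 1, 3 * p 2, 0]

/-!
All three fields are affine, `p ↦ c + A p`, and the bracket of affine fields is again affine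
with linear part the commutator of the matrices, so the bracket relations are finite matrix
computations. Tangency is a polynomial identity along `S`; for `e₃` it is Euler's identity for
`F`, which is weighted homogeneous of degree 3 for the weights `(2, 1)`.
-/

open Matrix

noncomputable def affineField {n : ℕ} (c : Fin n → ℝ) (A : Matrix (Fin n) (Fin n) ℝ) :
    (Fin n → ℝ) → Fin n → ℝ :=
  fun p => c + A *ᵥ p

theorem hasFDerivAt_affineField {n : ℕ} (c : Fin n → ℝ) (A : Matrix (Fin n) (Fin n) ℝ)
    (p : Fin n → ℝ) :
    HasFDerivAt (affineField c A) (toLin' A).toContinuousLinearMap p :=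
  (toLin' A).toContinuousLinearMap.hasFDerivAt.const_add c

theorem smul_affineField {n : ℕ} (a : ℝ) (c : Fin n → ℝ) (A : Matrix (Fin n) (Fin n) ℝ) :
    a • affineField c A = affineField (a • c) (a • A) := by
  ext p : 1
  simp [affineField, smul_mulVec]

theorem affineField_zero {n : ℕ} : affineField (0 : Fin n → ℝ) 0 = 0 := by
  ext p : 1
  simp [affineField]

theorem lieBracket_affineField (c d : Fin 4 → ℝ) (A B : Matrix (Fin 4) (Fin 4) ℝ) :
    lieBracket (affineField c A) (affineField d B) =
      affineField (B *ᵥ c - A *ᵥ d) (B * A - A * B) := by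
  ext p : 1
  simp only [lieBracket, (hasFDerivAt_affineField _ _ p).fderiv,
    LinearMap.coe_toContinuousLinearMap', toLin'_apply, affineField, mulVec_add, mulVec_mulVec,
    sub_mulVec]
  abel

theorem e₁_eq_affineField :
    e₁ = affineField ![1, 0, 0, 0] !![0, 0, 0, 0; 0, 0, 0, 0; 0, 1, 0, 0; 0, 0, 0, 0] := by
  ext p i
  fin_cases i <;> simp [e₁, affineField, vecHead, vecTail]

theorem e₂_eq_affineField :
    e₂ = affineField ![0, 1, 0, 0] !![0, -3, 0, 0; 0, 0, 0, 0; 1, 0, 0, 0; 0, 0, 0, 0] := by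
  ext p i
  fin_cases i <;> simp [e₂, affineField, vecHead, vecTail]

theorem e₃_eq_affineField :
    e₃ = affineField 0 !![2, 0, 0, 0; 0, 1, 0, 0; 0, 0, 3, 0; 0, 0, 0, 0] := by
  ext p i
  fin_cases i <;> simp [e₃, affineField, vecHead, vecTail]

theorem lieBracket_e₁_e₂ : lieBracket e₁ e₂ = 0 := by
  rw [e₁_eq_affineField, e₂_eq_affineField, lieBracket_affineField, ← affineField_zero]
  congr 1
  · ext i; fin_cases i <;> simp
  · ext i j; fin_cases i <;> fin_cases j <;> simp

theorem lieBracket_e₁_e₃ : lieBracket e₁ e₃ = (2 : ℝ) • e₁ := by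
  rw [e₁_eq_affineField, e₃_eq_affineField, lieBracket_affineField, smul_affineField]
  congr 1
  · ext i; fin_cases i <;> simp
  · ext i j; fin_cases i <;> fin_cases j <;> norm_num

theorem lieBracket_e₂_e₃ : lieBracket e₂ e₃ = e₂ := by
  rw [e₂_eq_affineField, e₃_eq_affineField, lieBracket_affineField]
  congr 1
  · ext i; fin_cases i <;> simp
  · ext i j; fin_cases i <;> fin_cases j <;> norm_num

theorem fderiv_F_apply (p v : ℝ × ℝ) :
    fderiv ℝ F p v = p.2 * v.1 + (p.1 + 3 * p.2 ^ 2) * v.2 := by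
  unfold F
  rw [fderiv_fun_add (by fun_prop) (by fun_prop), fderiv_fun_mul (by fun_prop) (by fun_prop),
    fderiv_fun_pow _ (by fun_prop)]
  simp only [fderiv_fst, fderiv_snd, Nat.add_one_sub_one, nsmul_eq_mul, Nat.cast_ofNat,
    _root_.add_apply, _root_.smul_apply, ContinuousLinearMap.coe_fst',
    ContinuousLinearMap.coe_snd', smul_eq_mul]
  ring

theorem tangentToGraph_F_G_iff (X : (Fin 4 → ℝ) → Fin 4 → ℝ) :
    TangentToGraph F G X ↔ ∀ p : ℝ × ℝ,
      X ![p.1, p.2, F p, G p] 2 = p.2 * X ![p.1, p.2, F p, G p] 0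
          + (p.1 + 3 * p.2 ^ 2) * X ![p.1, p.2, F p, G p] 1 ∧
        X ![p.1, p.2, F p, G p] 3 = 0 := by
  have hG : fderiv ℝ G = 0 := fderiv_const (0 : ℝ)
  simp [TangentToGraph, fderiv_F_apply, hG, G]

theorem tangentToGraph_e₁ : TangentToGraph F G e₁ :=
  (tangentToGraph_F_G_iff _).2 fun p =>
    ⟨show p.2 = p.2 * 1 + (p.1 + 3 * p.2 ^ 2) * 0 by ring, rfl⟩

theorem tangentToGraph_e₂ : TangentToGraph F G e₂ :=
  (tangentToGraph_F_G_iff _).2 fun p =>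
    ⟨show p.1 = p.2 * (-3 * p.2) + (p.1 + 3 * p.2 ^ 2) * 1 by ring, rfl⟩

theorem tangentToGraph_e₃ : TangentToGraph F G e₃ :=
  (tangentToGraph_F_G_iff _).2 fun p =>
    ⟨show 3 * F p = p.2 * (2 * p.1) + (p.1 + 3 * p.2 ^ 2) * p.2 by unfold F; ring, rfl⟩

theorem linearIndependent_pair_one_zero {K : Type*} [Field K] (a : K) :
    LinearIndependent K ![((1 : K), (0 : K)), (a, 1)] := by
  rw [LinearIndependent.pair_iff]
  intro s t hst
  have ht : t = 0 := by simpa using congrArg Prod.snd hst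
  subst ht
  simpa using congrArg Prod.fst hst

/-- **Model 2c3b4a:** the surface `{u = xy + y³, v = 0}` is affinely homogeneous, with
tangent vector fields `e₁, e₂, e₃` satisfying `[e₁,e₂] = 0`, `[e₁,e₃] = 2e₁`,
`[e₂,e₃] = e₂`. -/
theorem model_2c3b4a :
    (TangentToGraph F G e₁ ∧ TangentToGraph F G e₂ ∧ TangentToGraph F G e₃) ∧
    (∀ p : ℝ × ℝ,
      e₁ ![p.1, p.2, F p, G p] 0 = 1 ∧ e₁ ![p.1, p.2, F p, G p] 1 = 0 ∧
      e₂ ![p.1, p.2, F p, G p] 0 = -3 * p.2 ∧ e₂ ![p.1, p.2, F p, G p] 1 = 1 ∧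
      LinearIndependent ℝ
        ![((e₁ ![p.1, p.2, F p, G p] 0, e₁ ![p.1, p.2, F p, G p] 1) : ℝ × ℝ),
          ((e₂ ![p.1, p.2, F p, G p] 0, e₂ ![p.1, p.2, F p, G p] 1) : ℝ × ℝ)]) ∧
    (lieBracket e₁ e₂ = 0 ∧ lieBracket e₁ e₃ = (2 : ℝ) • e₁ ∧
      lieBracket e₂ e₃ = e₂) := by
  refine ⟨⟨tangentToGraph_e₁, tangentToGraph_e₂, tangentToGraph_e₃⟩, fun p => ?_,
    lieBracket_e₁_e₂, lieBracket_e₁_e₃, lieBracket_e₂_e₃⟩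
  simpa [e₁, e₂] using linearIndependent_pair_one_zero (-3 * p.2)

end Model2c3b4a
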